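/- arXiv:1810.08281 — 3 statements merged into one kernel-verified Lean document; each statement's English description precedes it below -/
import Mathlib

section
/- Let n ≥ 2 be an integer, r > 0, and let f : [0, r] → ℝ be continuous with f(t) > 0 for t ∈ (0, r]. Let ψ : [0, r] → ℝ be continuously differentiable on [0, r] with ψ(0) = 0, and suppose that for every t ∈ (0, r) one has ψ'(t) = (n-1)·f(t)^{1-n}·∫₀ᵗ ψ(s)·f(s)^{n-3} ds (the integrand being integrable on [0, t]). If there exists δ ∈ (0, r) such that ψ'(t) > 0 for all t ∈ (0, δ), then ψ(t) > 0 and ψ'(t) > 0 for all t ∈ (0, r). -/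
open Set MeasureTheory

/-- The radial factor `ψ` of the first nonconstant Steklov eigenfunction on a
rotationally symmetric ball does not change sign: if `ψ 0 = 0`,
`ψ'(t) = (n-1)·f(t)^{1-n}·∫₀ᵗ ψ·f^{n-3}` on `(0, r)` and `ψ' > 0` near `0`, then
`ψ > 0` and `ψ' > 0` on all of `(0, r)`. -/
theorem steklov_radial_factor_positive
    (n : ℕ) (hn : 2 ≤ n) (r : ℝ) (hr : 0 < r) (f ψ ψ' : ℝ → ℝ)
    (hfc : ContinuousOn f (Icc 0 r))
    (hfpos : ∀ t ∈ Ioc (0:ℝ) r, 0 < f t)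
    (hψd : ∀ t ∈ Icc (0:ℝ) r, HasDerivAt ψ (ψ' t) t)
    (hψ'c : ContinuousOn ψ' (Icc 0 r))
    (hψ0 : ψ 0 = 0)
    (hint : ∀ t ∈ Ioo (0:ℝ) r,
      IntervalIntegrable (fun s => ψ s * f s ^ ((n : ℝ) - 3)) volume 0 t)
    (hrep : ∀ t ∈ Ioo (0:ℝ) r,
      ψ' t = ((n : ℝ) - 1) * f t ^ (1 - (n : ℝ)) *
        ∫ s in (0:ℝ)..t, ψ s * f s ^ ((n : ℝ) - 3))
    (δ : ℝ) (hδ : δ ∈ Ioo (0:ℝ) r)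
    (hψ'pos : ∀ t ∈ Ioo (0:ℝ) δ, 0 < ψ' t) :
    ∀ t ∈ Ioo (0:ℝ) r, 0 < ψ t ∧ 0 < ψ' t := by
  have hψc : ContinuousOn ψ (Icc 0 r) := fun t ht =>
    (hψd t ht).continuousAt.continuousWithinAt
  have hn1 : (0:ℝ) < (n:ℝ) - 1 := by
    have : (2:ℝ) ≤ (n:ℝ) := by exact_mod_cast hn
    linarith
  -- ψ' positivity from representation
  have key : ∀ t ∈ Ioo (0:ℝ) r, (∀ s ∈ Ioo (0:ℝ) t, 0 < ψ s) → 0 < ψ' t := by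
    intro t ht hpos
    rw [hrep t ht]
    have hft : 0 < f t := hfpos t ⟨ht.1, ht.2.le⟩
    have hI : 0 < ∫ s in (0:ℝ)..t, ψ s * f s ^ ((n : ℝ) - 3) := by
      apply intervalIntegral.intervalIntegral_pos_of_pos_on (hint t ht)
      · intro s hs
        have hfs : 0 < f s := hfpos s ⟨hs.1, hs.2.le.trans ht.2.le⟩
        exact mul_pos (hpos s hs) (Real.rpow_pos_of_pos hfs _)
      · exact ht.1
    exact mul_pos (mul_pos hn1 (Real.rpow_pos_of_pos hft _)) hI
  -- strict monotonicity helper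
  have mono : ∀ a, 0 < a → a ≤ r → (∀ s ∈ Ioo (0:ℝ) a, 0 < ψ' s) →
      ∀ s ∈ Ioc (0:ℝ) a, 0 < ψ s := by
    intro a ha har hpos
    have hsub : Icc (0:ℝ) a ⊆ Icc 0 r := Icc_subset_Icc le_rfl har
    have hm : StrictMonoOn ψ (Icc 0 a) := by
      apply strictMonoOn_of_deriv_pos (convex_Icc 0 a) (hψc.mono hsub)
      intro x hx
      rw [interior_Icc] at hx
      rw [(hψd x (hsub ⟨hx.1.le, hx.2.le⟩)).deriv]
      exact hpos x hx
    intro s hs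
    have := hm ⟨le_rfl, ha.le⟩ ⟨hs.1.le, hs.2⟩ hs.1
    rwa [hψ0] at this
  have hψδ : ∀ s ∈ Ioc (0:ℝ) δ, 0 < ψ s := mono δ hδ.1 hδ.2.le hψ'pos
  -- main positivity of ψ on (0, r)
  have main : ∀ t ∈ Ioo (0:ℝ) r, 0 < ψ t := by
    by_contra h
    push_neg at h
    obtain ⟨t, ht, htle⟩ := h
    have hδt : δ < t := by
      by_contra hle
      push_neg at hle
      exact absurd (hψδ t ⟨ht.1, hle⟩) (not_lt.mpr htle)
    set S := Icc δ r ∩ ψ ⁻¹' (Iic 0) with hS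
    have htS : t ∈ S := ⟨⟨hδt.le, ht.2.le⟩, htle⟩
    have hSclosed : IsClosed S :=
      (hψc.mono (Icc_subset_Icc hδ.1.le le_rfl)).preimage_isClosed_of_isClosed
        isClosed_Icc isClosed_Iic
    have hcomp : IsCompact S :=
      isCompact_Icc.of_isClosed_subset hSclosed (fun x hx => hx.1)
    have hcS : sInf S ∈ S := hcomp.sInf_mem ⟨t, htS⟩
    set c := sInf S with hc
    have hδc : δ ≤ c := hcS.1.1
    have hct : c ≤ t := csInf_le hcomp.bddBelow htS
    have hcr : c < r := lt_of_le_of_lt hct ht.2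
    have hψposc : ∀ s ∈ Ioo (0:ℝ) c, 0 < ψ s := by
      intro s hs
      rcases le_or_gt s δ with h' | h'
      · exact hψδ s ⟨hs.1, h'⟩
      · by_contra hle
        push_neg at hle
        have hsS : s ∈ S := ⟨⟨h'.le, (hs.2.trans hcr).le⟩, hle⟩
        exact absurd (csInf_le hcomp.bddBelow hsS) (not_le.mpr hs.2)
    have hψ'posc : ∀ s ∈ Ioo (0:ℝ) c, 0 < ψ' s := fun s hs =>
      key s ⟨hs.1, hs.2.trans hcr⟩ (fun u hu => hψposc u ⟨hu.1, hu.2.trans hs.2⟩)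
    have hψcpos : 0 < ψ c :=
      mono c (hδ.1.trans_le hδc) hcr.le hψ'posc c ⟨hδ.1.trans_le hδc, le_rfl⟩
    have : ψ c ≤ 0 := hcS.2
    linarith
  intro t ht
  exact ⟨main t ht, key t ht (fun s hs => main s ⟨hs.1, hs.2.trans ht.2⟩)⟩
end

section
/- Let n ≥ 2 be an integer, r > 0, and let f : [0, r] → ℝ be continuously differentiable on (0, r] and continuous on [0, r] with f(t) > 0 for t ∈ (0, r]. Let ψ : [0, r] → ℝ be continuously differentiable on [0, r] and twice differentiable on (0, r), with ψ(0) = 0, satisfying (f^{n-1}·ψ')'(t) = (n-1)·f(t)^{n-3}·ψ(t) on (0, r). Assume lim_{t→0⁺} f(t)^{n-1}·ψ(t)·ψ'(t) = 0 and that t ↦ (ψ'(t))²·f(t)^{n-1} and t ↦ ψ(t)²·f(t)^{n-3} are integrable on (0, r). Then ∫₀ʳ (ψ'(t))²·f(t)^{n-1} dt + (n-1)·∫₀ʳ ψ(t)²·f(t)^{n-3} dt = f(r)^{n-1}·ψ(r)·ψ'(r). In particular, if ψ'(r) = v·ψ(r) with ψ(r) ≠ 0, then [∫₀ʳ (ψ')²·f^{n-1}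 dt + (n-1)·∫₀ʳ ψ²·f^{n-3} dt] / (ψ(r)²·f(r)^{n-1}) = v. -/
open Set MeasureTheory Filter Topology

/-! Multiplying `(w ψ')' = c ψ` by `ψ` gives `(w ψ ψ')' = (ψ')² w + c ψ²`, so the energy
`∫ (ψ')² w + ∫ c ψ²` is the boundary flux `w ψ ψ'` at `r`, the flux at `0⁺` being assumed to
vanish. With `w = f^{n-1}`, `c = (n-1) f^{n-3}` and the Robin condition `ψ'(r) = v ψ(r)`, the
flux at `r` is `v ψ(r)² f(r)^{n-1}`, which is the Rayleigh quotient statement. -/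

theorem hasDerivAt_flux_mul_of_hasDerivAt {w c ψ ψ' : ℝ → ℝ} {t : ℝ}
    (hψ : HasDerivAt ψ (ψ' t) t) (hflux : HasDerivAt (fun s => w s * ψ' s) (c t * ψ t) t) :
    HasDerivAt (fun s => w s * ψ s * ψ' s) (ψ' t ^ 2 * w t + c t * ψ t ^ 2) t := by
  exact (hflux.mul hψ).congr_deriv (by ring) |>.congr_of_eventuallyEq
    (.of_forall fun s => show _ = w s * ψ' s * ψ s by ring)

theorem integral_energy_eq_flux_of_sturmLiouville {a b : ℝ} (hab : a < b) {w c ψ ψ' : ℝ → ℝ}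
    (hψ : ∀ t ∈ Ioo a b, HasDerivAt ψ (ψ' t) t)
    (hflux : ∀ t ∈ Ioo a b, HasDerivAt (fun s => w s * ψ' s) (c t * ψ t) t)
    (hlim : Tendsto (fun t => w t * ψ t * ψ' t) (𝓝[>] a) (𝓝 0))
    (hcont : ContinuousWithinAt (fun t => w t * ψ t * ψ' t) (Iio b) b)
    (hint₁ : IntervalIntegrable (fun t => ψ' t ^ 2 * w t) volume a b)
    (hint₂ : IntervalIntegrable (fun t => c t * ψ t ^ 2) volume a b) :
    (∫ t in a..b, ψ' t ^ 2 * w t) + (∫ t in a..b, c t * ψ t ^ 2) = w b * ψ b * ψ' b := by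
  rw [← intervalIntegral.integral_add hint₁ hint₂,
    intervalIntegral.integral_eq_sub_of_hasDerivAt_of_tendsto hab
      (fun t ht => hasDerivAt_flux_mul_of_hasDerivAt (hψ t ht) (hflux t ht))
      (hint₁.add hint₂) hlim hcont.tendsto, sub_zero]

theorem steklov_radial_rayleigh_identity_general
    (n : ℕ) (r : ℝ) (hr : 0 < r) (f ψ ψ' : ℝ → ℝ)
    (hfc : ContinuousOn f (Icc 0 r))
    (hfpos : ∀ t ∈ Ioc (0:ℝ) r, 0 < f t)
    (hψd : ∀ t ∈ Icc (0:ℝ) r, HasDerivAt ψ (ψ' t) t)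
    (hψ'c : ContinuousOn ψ' (Icc 0 r))
    (hode : ∀ t ∈ Ioo (0:ℝ) r,
      HasDerivAt (fun s => f s ^ ((n : ℝ) - 1) * ψ' s)
        (((n : ℝ) - 1) * f t ^ ((n : ℝ) - 3) * ψ t) t)
    (hlim : Filter.Tendsto (fun t => f t ^ ((n : ℝ) - 1) * ψ t * ψ' t)
      (nhdsWithin 0 (Ioi 0)) (nhds 0))
    (hint₁ : IntervalIntegrable (fun t => (ψ' t) ^ 2 * f t ^ ((n : ℝ) - 1)) volume 0 r)
    (hint₂ : IntervalIntegrable (fun t => (ψ t) ^ 2 * f t ^ ((n : ℝ) - 3)) volume 0 r) :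
    ((∫ t in (0:ℝ)..r, (ψ' t) ^ 2 * f t ^ ((n : ℝ) - 1)) +
        ((n : ℝ) - 1) * ∫ t in (0:ℝ)..r, (ψ t) ^ 2 * f t ^ ((n : ℝ) - 3)
      = f r ^ ((n : ℝ) - 1) * ψ r * ψ' r) ∧
    ∀ v : ℝ, ψ' r = v * ψ r → ψ r ≠ 0 →
      ((∫ t in (0:ℝ)..r, (ψ' t) ^ 2 * f t ^ ((n : ℝ) - 1)) +
          ((n : ℝ) - 1) * ∫ t in (0:ℝ)..r, (ψ t) ^ 2 * f t ^ ((n : ℝ) - 3)) /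
        ((ψ r) ^ 2 * f r ^ ((n : ℝ) - 1)) = v := by
  have hrr : r ∈ Icc 0 r := right_mem_Icc.2 hr.le
  have hfr : 0 < f r := hfpos r (right_mem_Ioc.2 hr)
  have hcont : ContinuousWithinAt (fun t => f t ^ ((n : ℝ) - 1) * ψ t * ψ' t) (Iio r) r := by
    rw [← continuousWithinAt_Ioo_iff_Iio hr]
    exact ((((hfc r hrr).rpow_const (.inl hfr.ne')).mul
      (hψd r hrr).continuousAt.continuousWithinAt).mul (hψ'c r hrr)).mono Ioo_subset_Icc_self
  have hint_c : IntervalIntegrable (fun t => ((n : ℝ) - 1) * f t ^ ((n : ℝ) - 3) * ψ t ^ 2)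
      volume 0 r := by
    simpa only [mul_assoc, mul_comm (ψ _ ^ 2)] using hint₂.const_mul ((n : ℝ) - 1)
  have hpot : (∫ t in (0:ℝ)..r, ((n : ℝ) - 1) * f t ^ ((n : ℝ) - 3) * ψ t ^ 2)
      = ((n : ℝ) - 1) * ∫ t in (0:ℝ)..r, (ψ t) ^ 2 * f t ^ ((n : ℝ) - 3) := by
    rw [← intervalIntegral.integral_const_mul]
    simp only [mul_assoc, mul_comm (ψ _ ^ 2)]
  have henergy := integral_energy_eq_flux_of_sturmLiouville hr
    (fun t ht => hψd t (Ioo_subset_Icc_self ht)) hode hlim hcont hint₁ hint_c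
  rw [hpot] at henergy
  refine ⟨henergy, fun v hv hψr => ?_⟩
  rw [henergy, hv]
  field_simp

/-- Integration-by-parts identity for the radial Steklov equation
`(f^{n-1}·ψ')' = (n-1)·f^{n-3}·ψ` on `(0, r)` with `ψ 0 = 0`:
`∫₀ʳ (ψ')²·f^{n-1} + (n-1)·∫₀ʳ ψ²·f^{n-3} = f(r)^{n-1}·ψ(r)·ψ'(r)`.
In particular, if `ψ'(r) = v·ψ(r)` with `ψ(r) ≠ 0`, the Rayleigh quotient equals `v`. -/
theorem steklov_radial_rayleigh_identity
    (n : ℕ) (hn : 2 ≤ n) (r : ℝ) (hr : 0 < r) (f f' ψ ψ' : ℝ → ℝ)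
    (hfc : ContinuousOn f (Icc 0 r))
    (hfd : ∀ t ∈ Ioc (0:ℝ) r, HasDerivAt f (f' t) t)
    (hf'c : ContinuousOn f' (Ioc 0 r))
    (hfpos : ∀ t ∈ Ioc (0:ℝ) r, 0 < f t)
    (hψd : ∀ t ∈ Icc (0:ℝ) r, HasDerivAt ψ (ψ' t) t)
    (hψ'c : ContinuousOn ψ' (Icc 0 r))
    (hψ'' : ∀ t ∈ Ioo (0:ℝ) r, DifferentiableAt ℝ ψ' t)
    (hψ0 : ψ 0 = 0)
    (hode : ∀ t ∈ Ioo (0:ℝ) r,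
      HasDerivAt (fun s => f s ^ ((n : ℝ) - 1) * ψ' s)
        (((n : ℝ) - 1) * f t ^ ((n : ℝ) - 3) * ψ t) t)
    (hlim : Filter.Tendsto (fun t => f t ^ ((n : ℝ) - 1) * ψ t * ψ' t)
      (nhdsWithin 0 (Ioi 0)) (nhds 0))
    (hint₁ : IntervalIntegrable (fun t => (ψ' t) ^ 2 * f t ^ ((n : ℝ) - 1)) volume 0 r)
    (hint₂ : IntervalIntegrable (fun t => (ψ t) ^ 2 * f t ^ ((n : ℝ) - 3)) volume 0 r) :
    ((∫ t in (0:ℝ)..r, (ψ' t) ^ 2 * f t ^ ((n : ℝ) - 1)) +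
        ((n : ℝ) - 1) * ∫ t in (0:ℝ)..r, (ψ t) ^ 2 * f t ^ ((n : ℝ) - 3)
      = f r ^ ((n : ℝ) - 1) * ψ r * ψ' r) ∧
    ∀ v : ℝ, ψ' r = v * ψ r → ψ r ≠ 0 →
      ((∫ t in (0:ℝ)..r, (ψ' t) ^ 2 * f t ^ ((n : ℝ) - 1)) +
          ((n : ℝ) - 1) * ∫ t in (0:ℝ)..r, (ψ t) ^ 2 * f t ^ ((n : ℝ) - 3)) /
        ((ψ r) ^ 2 * f r ^ ((n : ℝ) - 1)) = v :=
  steklov_radial_rayleigh_identity_general n r hr f ψ ψ' hfc hfpos hψd hψ'c hode hlim hint₁ hint₂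
end

section
/- Let n ≥ 3 be an integer, r > 0, let (S, σ) be a measure space, let f : (0, r) → ℝ be differentiable with f > 0, and let J : (0, r) × S → ℝ be positive and differentiable in the first variable, satisfying f'(t)·J(t, ξ) − (∂ₜJ)(t, ξ)·f(t) ≤ 0 for all (t, ξ) ∈ (0, r) × S. Let e₁ : S → ℝ and w : S → [0, ∞) be measurable and define d*(t) = ∫_S e₁(ξ)²·J(t, ξ)^{n-1} dσ(ξ) and d♯(t) = ∫_S w(ξ)·J(t, ξ)^{n-3} dσ(ξ); assume both are finite, positive, and differentiable with derivative given by differentiation under the integral sign. Define h(t) = max{ d*(t), f(t)²·d♯(t)/(n-1) }. Then the function t ↦ f(t)^{n-1}/h(t) is nonincreasing on (0, r). -/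
/-!
The comparison inequality `f'·J − ∂ₜJ·f ≤ 0` says exactly that `t ↦ J(t, ξ)/f(t)` is
nondecreasing for every `ξ`. Hence `d*/f^{n-1} = ∫ e₁²·(J/f)^{n-1}` and
`d♯/f^{n-3} = ∫ w·(J/f)^{n-3}` are nondecreasing, and
`f^{n-1}/h = (max (d*/f^{n-1}) (d♯/((n-1)·f^{n-3})))⁻¹` is nonincreasing. This avoids
differentiating the merely Lipschitz function `h`.
-/

open Set MeasureTheory

theorem monotoneOn_div_of_hasDerivAt {s : Set ℝ} (hs : Convex ℝ s) {g g' f f' : ℝ → ℝ}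
    (hg : ∀ t ∈ s, HasDerivAt g (g' t) t) (hf : ∀ t ∈ s, HasDerivAt f (f' t) t)
    (hf₀ : ∀ t ∈ s, 0 < f t) (hcomp : ∀ t ∈ s, f' t * g t - g' t * f t ≤ 0) :
    MonotoneOn (fun t => g t / f t) s := by
  have hquot : ∀ t ∈ s, HasDerivAt (fun t => g t / f t)
      ((g' t * f t - g t * f' t) / f t ^ 2) t :=
    fun t ht => (hg t ht).div (hf t ht) (hf₀ t ht).ne'
  refine monotoneOn_of_hasDerivWithinAt_nonneg hs
    (fun t ht => (hquot t ht).continuousAt.continuousWithinAt)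
    (fun t ht => (hquot t (interior_subset ht)).hasDerivWithinAt) fun t ht => ?_
  have := hcomp t (interior_subset ht)
  exact div_nonneg (by linarith) (sq_nonneg _)

section Integral

variable {S : Type*} [MeasurableSpace S] {σ : Measure S}

theorem monotoneOn_integral {α : Type*} [Preorder α] {s : Set α} {F : α → S → ℝ}
    (hF : ∀ ξ, MonotoneOn (F · ξ) s) (hint : ∀ t ∈ s, Integrable (F t) σ) :
    MonotoneOn (fun t => ∫ ξ, F t ξ ∂σ) s :=
  fun _ ha _ hb hab => integral_mono (hint _ ha) (hint _ hb) fun ξ => hF ξ ha hb hab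

theorem integral_mul_pow_div_pow (u : S → ℝ) (J : S → ℝ) (x : ℝ) (k : ℕ) :
    (∫ ξ, u ξ * J ξ ^ k ∂σ) / x ^ k = ∫ ξ, u ξ * (J ξ / x) ^ k ∂σ := by
  simp only [div_pow, ← mul_div_assoc, integral_div]

theorem monotoneOn_div_pow_of_eq_integral {s : Set ℝ} {d f : ℝ → ℝ} {J : ℝ → S → ℝ}
    {u : S → ℝ} {k : ℕ} (hd : ∀ t ∈ s, d t = ∫ ξ, u ξ * J t ξ ^ k ∂σ)
    (hint : ∀ t ∈ s, Integrable (fun ξ => u ξ * J t ξ ^ k) σ) (hu : ∀ ξ, 0 ≤ u ξ)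
    (hJf : ∀ ξ, MonotoneOn (fun t => J t ξ / f t) s) (hJf₀ : ∀ t ∈ s, ∀ ξ, 0 ≤ J t ξ / f t) :
    MonotoneOn (fun t => d t / f t ^ k) s := by
  have hmono : MonotoneOn (fun t => ∫ ξ, u ξ * (J t ξ / f t) ^ k ∂σ) s := by
    refine monotoneOn_integral (fun ξ a ha _ hb hab => ?_) fun t ht => ?_
    · exact mul_le_mul_of_nonneg_left (pow_le_pow_left₀ (hJf₀ a ha ξ) (hJf ξ ha hb hab) k) (hu ξ)
    · simpa only [div_pow, ← mul_div_assoc] using (hint t ht).div_const (f t ^ k)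
  refine hmono.congr fun t ht => ?_
  simp only [hd t ht, integral_mul_pow_div_pow]

end Integral

theorem antitoneOn_inv_max {α : Type*} [Preorder α] {s : Set α} {p q : α → ℝ}
    (hp : MonotoneOn p s) (hq : MonotoneOn q s) (hp₀ : ∀ t ∈ s, 0 < p t) :
    AntitoneOn (fun t => (max (p t) (q t))⁻¹) s :=
  fun a ha _ hb hab => inv_anti₀ (lt_max_of_lt_left (hp₀ a ha))
    (max_le_max (hp ha hb hab) (hq ha hb hab))

theorem pow_div_max_eq_inv_max {x A B c : ℝ} {k l : ℕ} (hkl : l = k + 2) (hx : 0 < x) :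
    x ^ l / max A (x ^ 2 * B / c) = (max (A / x ^ l) (B / x ^ k / c))⁻¹ := by
  subst hkl
  have hpow : x ^ 2 * B / c / x ^ (k + 2) = B / x ^ k / c := by
    field_simp
    ring
  rw [← hpow, max_div_div_right (by positivity), inv_div]

theorem model_quotient_h_antitone_general
    {S : Type*} [MeasurableSpace S] (σ : Measure S)
    (n : ℕ) (hn : 3 ≤ n) (r : ℝ)
    (f f' : ℝ → ℝ) (J J' : ℝ → S → ℝ) (e₁ w : S → ℝ) (dstar dsharp : ℝ → ℝ)
    (hfd : ∀ t ∈ Ioo (0:ℝ) r, HasDerivAt f (f' t) t)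
    (hfpos : ∀ t ∈ Ioo (0:ℝ) r, 0 < f t)
    (hJd : ∀ t ∈ Ioo (0:ℝ) r, ∀ ξ : S, HasDerivAt (fun s => J s ξ) (J' t ξ) t)
    (hJpos : ∀ t ∈ Ioo (0:ℝ) r, ∀ ξ : S, 0 < J t ξ)
    (hcomp : ∀ t ∈ Ioo (0:ℝ) r, ∀ ξ : S, f' t * J t ξ - J' t ξ * f t ≤ 0)
    (hwnn : ∀ ξ : S, 0 ≤ w ξ)
    (hdstar : ∀ t ∈ Ioo (0:ℝ) r, dstar t = ∫ ξ, e₁ ξ ^ 2 * J t ξ ^ (n - 1) ∂σ)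
    (hdstarint : ∀ t ∈ Ioo (0:ℝ) r, Integrable (fun ξ => e₁ ξ ^ 2 * J t ξ ^ (n - 1)) σ)
    (hdstarpos : ∀ t ∈ Ioo (0:ℝ) r, 0 < dstar t)
    (hdsharp : ∀ t ∈ Ioo (0:ℝ) r, dsharp t = ∫ ξ, w ξ * J t ξ ^ (n - 3) ∂σ)
    (hdsharpint : ∀ t ∈ Ioo (0:ℝ) r, Integrable (fun ξ => w ξ * J t ξ ^ (n - 3)) σ) :
    AntitoneOn
      (fun t => f t ^ (n - 1) / max (dstar t) (f t ^ 2 * dsharp t / ((n : ℝ) - 1)))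
      (Ioo 0 r) := by
  have hJf : ∀ ξ, MonotoneOn (fun t => J t ξ / f t) (Ioo 0 r) := fun ξ =>
    monotoneOn_div_of_hasDerivAt (convex_Ioo 0 r) (fun t ht => hJd t ht ξ) hfd hfpos
      fun t ht => hcomp t ht ξ
  have hJf₀ : ∀ t ∈ Ioo (0:ℝ) r, ∀ ξ, 0 ≤ J t ξ / f t := fun t ht ξ =>
    (div_pos (hJpos t ht ξ) (hfpos t ht)).le
  have hstar := monotoneOn_div_pow_of_eq_integral hdstar hdstarint (fun ξ => sq_nonneg (e₁ ξ))
    hJf hJf₀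
  have hsharp := monotoneOn_div_pow_of_eq_integral hdsharp hdsharpint hwnn hJf hJf₀
  have hn₁ : (0:ℝ) ≤ (n:ℝ) - 1 := by
    have : (3:ℝ) ≤ n := by exact_mod_cast hn
    linarith
  have hsharp' : MonotoneOn (fun t => dsharp t / f t ^ (n - 3) / ((n:ℝ) - 1)) (Ioo 0 r) :=
    fun a ha b hb hab => div_le_div_of_nonneg_right (hsharp ha hb hab) hn₁
  refine (antitoneOn_inv_max hstar hsharp' fun t ht =>
    div_pos (hdstarpos t ht) (pow_pos (hfpos t ht) _)).congr fun t ht => ?_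
  exact (pow_div_max_eq_inv_max (by omega) (hfpos t ht)).symm

/-- Bishop-comparison monotonicity for `h = max{d*, f²·d♯/(n-1)}`: if
`f'·J − ∂ₜJ·f ≤ 0` on `(0, r) × S`, then `t ↦ f(t)^{n-1} / h(t)` is nonincreasing,
where `d*(t) = ∫_S e₁²·J^{n-1} dσ` and `d♯(t) = ∫_S w·J^{n-3} dσ`. -/
theorem model_quotient_h_antitone
    {S : Type*} [MeasurableSpace S] (σ : Measure S)
    (n : ℕ) (hn : 3 ≤ n) (r : ℝ) (hr : 0 < r)
    (f f' : ℝ → ℝ) (J J' : ℝ → S → ℝ) (e₁ w : S → ℝ) (dstar dsharp : ℝ → ℝ)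
    (hfd : ∀ t ∈ Ioo (0:ℝ) r, HasDerivAt f (f' t) t)
    (hfpos : ∀ t ∈ Ioo (0:ℝ) r, 0 < f t)
    (hJd : ∀ t ∈ Ioo (0:ℝ) r, ∀ ξ : S, HasDerivAt (fun s => J s ξ) (J' t ξ) t)
    (hJpos : ∀ t ∈ Ioo (0:ℝ) r, ∀ ξ : S, 0 < J t ξ)
    (hcomp : ∀ t ∈ Ioo (0:ℝ) r, ∀ ξ : S, f' t * J t ξ - J' t ξ * f t ≤ 0)
    (he₁ : Measurable e₁) (hw : Measurable w) (hwnn : ∀ ξ : S, 0 ≤ w ξ)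
    (hdstar : ∀ t ∈ Ioo (0:ℝ) r, dstar t = ∫ ξ, e₁ ξ ^ 2 * J t ξ ^ (n - 1) ∂σ)
    (hdstarint : ∀ t ∈ Ioo (0:ℝ) r, Integrable (fun ξ => e₁ ξ ^ 2 * J t ξ ^ (n - 1)) σ)
    (hdstarpos : ∀ t ∈ Ioo (0:ℝ) r, 0 < dstar t)
    (hdstarderiv : ∀ t ∈ Ioo (0:ℝ) r,
      HasDerivAt dstar
        (∫ ξ, e₁ ξ ^ 2 * (((n : ℝ) - 1) * J t ξ ^ (n - 2) * J' t ξ) ∂σ) t)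
    (hdsharp : ∀ t ∈ Ioo (0:ℝ) r, dsharp t = ∫ ξ, w ξ * J t ξ ^ (n - 3) ∂σ)
    (hdsharpint : ∀ t ∈ Ioo (0:ℝ) r, Integrable (fun ξ => w ξ * J t ξ ^ (n - 3)) σ)
    (hdsharppos : ∀ t ∈ Ioo (0:ℝ) r, 0 < dsharp t)
    (hdsharpderiv : ∀ t ∈ Ioo (0:ℝ) r,
      HasDerivAt dsharp
        (∫ ξ, w ξ * (((n : ℝ) - 3) * J t ξ ^ (n - 4) * J' t ξ) ∂σ) t) :
    AntitoneOn
      (fun t => f t ^ (n - 1) / max (dstar t) (f t ^ 2 * dsharp t / ((n : ℝ) - 1)))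
      (Ioo 0 r) :=
  model_quotient_h_antitone_general σ n hn r f f' J J' e₁ w dstar dsharp hfd hfpos hJd hJpos hcomp
    hwnn hdstar hdstarint hdstarpos hdsharp hdsharpint
end
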